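/- arXiv:1909.06118 — 3 statements merged into one kernel-verified Lean document; each statement's English description precedes it below -/
import Mathlib

section
/- Let E be a qubit channel whose affine matrix M is symmetric with all eigenvalues nonnegative (i.e., M is positive semidefinite symmetric). Then for every unitary V, the average fidelity of the channel ρ ↦ V E(ρ) V† does not exceed the average fidelity of E; i.e., the fidelity increase Δ F̄ = (2/3)max(xᵀB̂x + x₀ v·x) over x₀²+‖x‖²=1 is ≤ 0 given v = 0 and B̂ = (1/2)(M − (Tr M)I). -/
/-!
With `v = 0` the fidelity change is `(1/3)(xᵀMx - Tr M ‖x‖²)`, so it suffices that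
`xᵀMx ≤ Tr M ‖x‖²` for positive semidefinite `M`. Writing `M = SᵀS`, the left side is
`∑ᵢ (Sᵢ ⬝ x)²` and `Tr M = ∑ᵢ ‖Sᵢ‖²`, so this is Cauchy–Schwarz applied row by row.
-/

open Matrix

namespace Matrix

variable {m n R : Type*} [Fintype m] [Fintype n]

lemma dotProduct_transpose_mul_self_mulVec [CommSemiring R] (B : Matrix m n R) (x : n → R) :
    x ⬝ᵥ (Bᵀ * B) *ᵥ x = (B *ᵥ x) ⬝ᵥ (B *ᵥ x) := by
  rw [← mulVec_mulVec, dotProduct_mulVec, vecMul_transpose]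

lemma trace_transpose_mul_self [CommSemiring R] (B : Matrix m n R) :
    (Bᵀ * B).trace = ∑ i, B i ⬝ᵥ B i := by
  simp only [trace, diag, mul_apply, transpose_apply, dotProduct]
  exact Finset.sum_comm

section LinearOrder

variable [CommRing R] [LinearOrder R] [IsStrictOrderedRing R]

lemma sq_dotProduct_le (u v : n → R) : (u ⬝ᵥ v) ^ 2 ≤ (u ⬝ᵥ u) * (v ⬝ᵥ v) := by
  simpa only [dotProduct, sq] using Finset.sum_mul_sq_le_sq_mul_sq Finset.univ u v

lemma mulVec_dotProduct_mulVec_le (B : Matrix m n R) (x : n → R) :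
    (B *ᵥ x) ⬝ᵥ (B *ᵥ x) ≤ (Bᵀ * B).trace * (x ⬝ᵥ x) := by
  rw [trace_transpose_mul_self, Finset.sum_mul]
  refine Finset.sum_le_sum fun i _ ↦ ?_
  simpa only [mulVec, sq] using sq_dotProduct_le (B i) x

end LinearOrder

open scoped MatrixOrder in
lemma PosSemidef.exists_eq_transpose_mul_self {M : Matrix n n ℝ} (hM : M.PosSemidef) :
    ∃ S : Matrix n n ℝ, M = Sᵀ * S := by
  classical
  refine ⟨CFC.sqrt M, ?_⟩
  rw [← conjTranspose_eq_transpose_of_trivial, ← star_eq_conjTranspose,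
    (CFC.sqrt_nonneg M).isSelfAdjoint.star_eq, CFC.sqrt_mul_sqrt_self M hM.nonneg]

lemma PosSemidef.dotProduct_mulVec_le_trace_mul {M : Matrix n n ℝ} (hM : M.PosSemidef)
    (x : n → ℝ) : x ⬝ᵥ M *ᵥ x ≤ M.trace * (x ⬝ᵥ x) := by
  obtain ⟨S, rfl⟩ := hM.exists_eq_transpose_mul_self
  rw [dotProduct_transpose_mul_self_mulVec]
  exact mulVec_dotProduct_mulVec_le S x

end Matrix

theorem no_fidelity_increase_psd_general (M : Matrix (Fin 3) (Fin 3) ℝ) (hM : M.PosSemidef)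
    (v : Fin 3 → ℝ) (hv : v = 0)
    (Bhat : Matrix (Fin 3) (Fin 3) ℝ)
    (hBhat : Bhat = (1/2 : ℝ) • (M - M.trace • (1 : Matrix (Fin 3) (Fin 3) ℝ)))
    (x₀ : ℝ) (x : Fin 3 → ℝ) :
    (2/3) * (x ⬝ᵥ Bhat.mulVec x + x₀ * (v ⬝ᵥ x)) ≤ 0 := by
  subst hv hBhat
  have hquad : x ⬝ᵥ ((1/2 : ℝ) • (M - M.trace • 1)) *ᵥ x
      = (1/2) * (x ⬝ᵥ M *ᵥ x - M.trace * (x ⬝ᵥ x)) := by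
    rw [smul_mulVec, sub_mulVec, smul_mulVec, one_mulVec, dotProduct_smul, dotProduct_sub,
      dotProduct_smul, smul_eq_mul, smul_eq_mul]
  have hle := hM.dotProduct_mulVec_le_trace_mul x
  rw [hquad, zero_dotProduct, mul_zero, add_zero]
  linarith

/-- If the affine matrix `M` of a qubit channel is symmetric positive semidefinite
(so `v = 0` and `B̂ = (1/2)(M − (Tr M)·I)`), then for every unitary `V = x₀ + i x·σ`
the fidelity change `(2/3)(xᵀ B̂ x + x₀ v·x)` is nonpositive: composing with any
unitary cannot increase the average fidelity. -/
theorem no_fidelity_increase_psd (M : Matrix (Fin 3) (Fin 3) ℝ) (hM : M.PosSemidef)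
    (v : Fin 3 → ℝ) (hv : v = 0)
    (Bhat : Matrix (Fin 3) (Fin 3) ℝ)
    (hBhat : Bhat = (1/2 : ℝ) • (M - M.trace • (1 : Matrix (Fin 3) (Fin 3) ℝ)))
    (x₀ : ℝ) (x : Fin 3 → ℝ) (hx : x₀ ^ 2 + ∑ α, x α ^ 2 = 1) :
    (2/3) * (x ⬝ᵥ Bhat.mulVec x + x₀ * (v ⬝ᵥ x)) ≤ 0 :=
  no_fidelity_increase_psd_general M hM v hv Bhat hBhat x₀ x
end

section
/- For the Pauli channel E with probabilities (p₀, p₁, p₂, p₃), let p_max = max(p₁, p₂, p₃) and suppose p_max is attained at index j ∈ {1,2,3}. Then the channel ρ ↦ σ_j E(ρ) σ_j has average fidelity (1/3)(1 + 2p_max), and this is the largest average fidelity achievable by composing E with any unitary conjugation or with the identity: for every unit vector (x₀,x) ∈ ℝ⁴ and V = x₀ + ix·σ, the average fidelity of V E(·)V† is at most (1/3)(1 + 2 max(p₀, p₁, p₂, p₃)). -/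
open Matrix Complex BigOperators

/-- The three Pauli matrices. -/
noncomputable def pauli : Fin 3 → Matrix (Fin 2) (Fin 2) ℂ :=
  ![!![0, 1; 1, 0], !![0, -I; I, 0], !![1, 0; 0, -1]]

/-- `b·σ` for a complex vector `b`. -/
noncomputable def dotSigma (b : Fin 3 → ℂ) : Matrix (Fin 2) (Fin 2) ℂ :=
  ∑ α, b α • pauli α

/-- `(σ₀, σ₁, σ₂, σ₃)` with `σ₀ = I`. -/
noncomputable def pauli4 : Fin 4 → Matrix (Fin 2) (Fin 2) ℂ :=
  ![1, pauli 0, pauli 1, pauli 2]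

/-- The average fidelity of a channel given by a family of qubit Kraus operators,
`(1/3)(1 + 2∑ᵢ |(1/2)Tr Kᵢ|²)`. -/
noncomputable def avgFid {ι : Type*} [Fintype ι] (K : ι → Matrix (Fin 2) (Fin 2) ℂ) : ℝ :=
  (1/3) * (1 + 2 * ∑ i, Complex.normSq ((1/2 : ℂ) * (K i).trace))

/-- For the Pauli channel with probabilities `(p₀,p₁,p₂,p₃)` and Kraus operators
`√pᵢ σᵢ`, if `p_max = max(p₁,p₂,p₃)` is attained at index `j ∈ {1,2,3}`, then
composing with `σⱼ` yields average fidelity `(1/3)(1 + 2p_max)`, and composing with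
any unitary `V = x₀ + ix·σ` yields average fidelity at most
`(1/3)(1 + 2max(p₀,p₁,p₂,p₃))`. -/
theorem pauli_channel_quasi_inverse (p : Fin 4 → ℝ)
    (hp : ∀ i, 0 ≤ p i) (hsum : ∑ i, p i = 1)
    (j : Fin 3) (hj : p j.succ = max (p 1) (max (p 2) (p 3))) :
    avgFid (fun i => pauli4 j.succ * ((Real.sqrt (p i) : ℂ) • pauli4 i))
        = (1/3) * (1 + 2 * max (p 1) (max (p 2) (p 3))) ∧
    ∀ (x₀ : ℝ) (x : Fin 3 → ℝ), x₀ ^ 2 + ∑ α, x α ^ 2 = 1 →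
      avgFid (fun i => ((x₀ : ℂ) • 1 + I • dotSigma (fun α => (x α : ℂ)))
          * ((Real.sqrt (p i) : ℂ) • pauli4 i))
        ≤ (1/3) * (1 + 2 * max (p 0) (max (p 1) (max (p 2) (p 3)))) := by
  constructor
  · have key : ∑ i : Fin 4, Complex.normSq ((1/2 : ℂ) *
        (pauli4 j.succ * ((Real.sqrt (p i) : ℂ) • pauli4 i)).trace) = p j.succ := by
      fin_cases j <;>
        simp [Fin.sum_univ_four, pauli4, pauli, Matrix.trace_fin_two, Matrix.mul_apply,
          Fin.sum_univ_two, Complex.normSq, Complex.ext_iff] <;>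
        ring_nf <;> (try rw [Real.sq_sqrt (hp _)]) <;> (try rfl)
    rw [avgFid, key, hj]
  · intro x₀ x hx
    have key : ∑ i : Fin 4, Complex.normSq ((1/2 : ℂ) *
        (((x₀ : ℂ) • 1 + I • dotSigma (fun α => (x α : ℂ)))
          * ((Real.sqrt (p i) : ℂ) • pauli4 i)).trace)
        = p 0 * x₀^2 + p 1 * (x 0)^2 + p 2 * (x 1)^2 + p 3 * (x 2)^2 := by
      simp [Fin.sum_univ_four, pauli4, pauli, dotSigma, Fin.sum_univ_three,
        Matrix.trace_fin_two, Matrix.mul_apply, Fin.sum_univ_two, Complex.normSq,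
        Complex.ext_iff, Matrix.one_apply]
      ring_nf
      rw [Real.sq_sqrt (hp 0), Real.sq_sqrt (hp 1), Real.sq_sqrt (hp 2), Real.sq_sqrt (hp 3)]
      ring
    rw [avgFid, key]
    set M := max (p 0) (max (p 1) (max (p 2) (p 3))) with hM
    have h0 : p 0 ≤ M := le_max_left _ _
    have h1 : p 1 ≤ M := le_trans (le_max_left _ _) (le_max_right _ _)
    have h2 : p 2 ≤ M := le_trans (le_trans (le_max_left _ _) (le_max_right _ _)) (le_max_right _ _)
    have h3 : p 3 ≤ M := le_trans (le_trans (le_max_right _ _) (le_max_right _ _)) (le_max_right _ _)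
    have hx' : x₀^2 + ((x 0)^2 + (x 1)^2 + (x 2)^2) = 1 := by
      simp [Fin.sum_univ_three] at hx; linarith
    nlinarith [sq_nonneg x₀, sq_nonneg (x 0), sq_nonneg (x 1), sq_nonneg (x 2),
      hp 0, hp 1, hp 2, hp 3]
end

section
/- For the amplitude damping channel with Kraus operators A₀ = diag(1, γ) and A₁ = [[0, √(1−γ²)],[0,0]] with 0 < γ ≤ 1, for every unitary V = x₀ + ix·σ with x₀² + ‖x‖² = 1 the average fidelity of ρ ↦ V E(ρ)V† is at most the average fidelity of E itself (which equals 1/2 + γ²/6 + γ/3); i.e., the fidelity change (2/3)(x₀,xᵀ)Q(x₀,x)ᵀ is ≤ 0 where Q = (1/2)diag(0, −γ(γ+1), −γ(γ+1), −2γ). -/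
open Matrix Complex BigOperators

/-- For the amplitude damping channel with Kraus operators `A₀ = diag(1, γ)` and
`A₁ = [[0, √(1−γ²)],[0,0]]`, `0 < γ ≤ 1`: its average fidelity (computed as
`(1/3)(1 + 2∑ᵢ|(1/2)Tr Aᵢ|²)`) equals `1/2 + γ²/6 + γ/3`, and for every unitary
`V = x₀ + ix·σ` with `x₀² + ‖x‖² = 1`, the average fidelity of `ρ ↦ V E(ρ) V†` is at
most that of `E`; equivalently the fidelity change `(2/3)(x₀,xᵀ)Q(x₀,x)ᵀ` with
`Q = (1/2)diag(0, −γ(γ+1), −γ(γ+1), −2γ)` is nonpositive. -/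
theorem amplitude_damping_no_quasi_inverse (γ : ℝ) (h0 : 0 < γ) (h1 : γ ≤ 1) :
    let A0 : Matrix (Fin 2) (Fin 2) ℂ := !![1, 0; 0, (γ : ℂ)]
    let A1 : Matrix (Fin 2) (Fin 2) ℂ := !![0, (Real.sqrt (1 - γ ^ 2) : ℂ); 0, 0]
    let Q : Matrix (Fin 4) (Fin 4) ℝ :=
      (1/2 : ℝ) • Matrix.diagonal ![0, -γ * (γ + 1), -γ * (γ + 1), -2 * γ]
    (1/3) * (1 + 2 * (Complex.normSq ((1/2 : ℂ) * A0.trace)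
        + Complex.normSq ((1/2 : ℂ) * A1.trace))) = 1/2 + γ ^ 2 / 6 + γ / 3 ∧
    ∀ (x₀ : ℝ) (x : Fin 3 → ℝ), x₀ ^ 2 + ∑ α, x α ^ 2 = 1 →
      (let V : Matrix (Fin 2) (Fin 2) ℂ :=
        (x₀ : ℂ) • 1 + I • dotSigma (fun α => (x α : ℂ))
      (1/3) * (1 + 2 * (Complex.normSq ((1/2 : ℂ) * (V * A0).trace)
          + Complex.normSq ((1/2 : ℂ) * (V * A1).trace)))
        ≤ 1/2 + γ ^ 2 / 6 + γ / 3) ∧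
      (2/3) * (![x₀, x 0, x 1, x 2] ⬝ᵥ Q.mulVec ![x₀, x 0, x 1, x 2]) ≤ 0 := by
  intro A0 A1 Q
  have hs : Real.sqrt (1 - γ ^ 2) ^ 2 = 1 - γ ^ 2 :=
    Real.sq_sqrt (by nlinarith)
  constructor
  · simp [A0, A1, Matrix.trace_fin_two, Complex.normSq_apply]
    ring
  · intro x₀ x hx
    rw [Fin.sum_univ_three] at hx
    constructor
    · intro V
      have hV : V = !![(x₀ : ℂ) + I * (x 2), I * (x 0) + (x 1);
                       I * (x 0) - (x 1), (x₀ : ℂ) - I * (x 2)] := by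
        simp [V, dotSigma, pauli, Fin.sum_univ_three]
        ext i j
        fin_cases i <;> fin_cases j <;> simp [Matrix.one_apply] <;>
          ring_nf <;> simp [Complex.I_sq] <;> ring
      rw [hV]
      simp [A0, A1, Matrix.trace_fin_two, Matrix.mul_apply, Fin.sum_univ_two,
        Complex.normSq_apply]
      nlinarith [sq_nonneg (x 0), sq_nonneg (x 1), sq_nonneg (x 2),
        Real.sqrt_nonneg (1 - γ ^ 2), hs, sq_nonneg x₀]
    · simp [Q, Matrix.mulVec, dotProduct, Fin.sum_univ_four,
        Matrix.diagonal]
      nlinarith [sq_nonneg (x 0), sq_nonneg (x 1), sq_nonneg (x 2)]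
end
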